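/- For every ELIU_⊥ ontology O, the set E_O is an exhaustive ELI_⊥-approximation set for O, where E_O is defined as follows: first rewrite each inclusion C ⊑ D of O into the inclusions {C' ⊑ D : C' ∈ f(C)}, and then E_O consists of all ontologies obtained by choosing, for each resulting inclusion C' ⊑ D, one inclusion C' ⊑ D' with D' ∈ f(D). Here f(C) is the set of disjunction-free (ELI_⊥) disjuncts of C: f(C) = {C} for C atomic, ⊤, or ⊥; f(∃r.D) = {∃r.D' : D' ∈ f(D)}; f(D₁ ⊓ D₂) = {D₁' ⊓ D₂' : Dᵢ' ∈ f(Dᵢ)}; f(D₁ ⊔ D₂) = f(D₁) ∪ f(D₂). -/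

import Mathlib

set_option autoImplicit false

attribute [local instance] Classical.propDecidable

/-! ### Interpretations, databases, homomorphisms -/

structure Interp (C R A : Type) where
  cn : C → A → Prop
  rn : R → A → A → Prop

namespace Interp

variable {C R A : Type}

/-- The active domain of an interpretation/database. -/
def adom (I : Interp C R A) : Set A :=
  {a | (∃ c, I.cn c a) ∨ (∃ r b, I.rn r a b) ∨ (∃ r b, I.rn r b a)}

/-- An interpretation has finitely many facts (this is what makes it a database). -/
def FiniteFacts (I : Interp C R A) : Prop :=
  {p : C × A | I.cn p.1 p.2}.Finite ∧ {t : R × A × A | I.rn t.1 t.2.1 t.2.2}.Finite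

/-- All facts use only symbols from the signature `(SC, SR)`. -/
def InSig (I : Interp C R A) (SC : Set C) (SR : Set R) : Prop :=
  (∀ c a, I.cn c a → c ∈ SC) ∧ (∀ r a b, I.rn r a b → r ∈ SR)

/-- Restriction of an interpretation to a set of elements. -/
def restrict (I : Interp C R A) (s : Set A) : Interp C R A where
  cn c a := a ∈ s ∧ I.cn c a
  rn r a b := a ∈ s ∧ b ∈ s ∧ I.rn r a b

/-- Semantics of (possibly inverse) roles: `Sum.inl r` is `r`, `Sum.inr r` is `r⁻`. -/
def roleE (I : Interp C R A) : R ⊕ R → A → A → Prop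
  | .inl r, a, b => I.rn r a b
  | .inr r, a, b => I.rn r b a

/-- The undirected graph underlying an interpretation. -/
def graphOf (I : Interp C R A) : SimpleGraph A where
  Adj a b := a ≠ b ∧ ∃ r, I.rn r a b ∨ I.rn r b a
  symm := ⟨by rintro a b ⟨hne, r, hr⟩; exact ⟨hne.symm, r, hr.symm⟩⟩
  loopless := ⟨by rintro a ⟨hne, -⟩; exact hne rfl⟩

/-- A database/interpretation is a tree: the underlying graph is acyclic,
there are no self loops and no multi-edges (trees need not be connected). -/
def IsTree (I : Interp C R A) : Prop :=
  I.graphOf.IsAcyclic ∧ (∀ r a, ¬ I.rn r a a) ∧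
    (∀ (ρ₁ ρ₂ : R ⊕ R) (a b : A), ρ₁ ≠ ρ₂ → I.roleE ρ₁ a b → ¬ I.roleE ρ₂ a b)

end Interp

/-- Homomorphisms between interpretations. -/
structure Hom {C R A B : Type} (I : Interp C R A) (J : Interp C R B) where
  toFun : A → B
  map_cn : ∀ c a, I.cn c a → J.cn c (toFun a)
  map_rn : ∀ r a b, I.rn r a b → J.rn r (toFun a) (toFun b)

/-! ### Tree decompositions and treewidth -/

/-- An `(ℓ,k)`-tree decomposition of an interpretation: an undirected tree `(V,G)`
with bags of size at most `k`, pairwise overlaps of size at most `ℓ`, every active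
element appearing in a nonempty connected set of bags, and every role edge
contained in some bag. -/
structure TreeDecomp {C R A : Type} (I : Interp C R A) (ℓ k : ℕ) where
  V : Type
  G : SimpleGraph V
  conn : G.Connected
  acyc : G.IsAcyclic
  bag : V → Set A
  cover : ∀ a ∈ I.adom, (G.induce {v | a ∈ bag v}).Connected
  edges : ∀ r a b, I.rn r a b → ∃ v, a ∈ bag v ∧ b ∈ bag v
  bagFin : ∀ v, (bag v).Finite
  bagCard : ∀ v, (bag v).ncard ≤ k
  overlap : ∀ v w, v ≠ w → (bag v ∩ bag w).ncard ≤ ℓ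

/-- `I` has treewidth `(ℓ,k)`. -/
def HasTW {C R A : Type} (I : Interp C R A) (ℓ k : ℕ) : Prop :=
  Nonempty (TreeDecomp I ℓ k)

/-! ### Conjunctive queries and UCQs -/

/-- A conjunctive query with `m` answer variables (`Fin m`) and quantified
variables `V`. -/
structure CQ (C R : Type) (m : ℕ) where
  V : Type
  cnAtoms : Set (C × (Fin m ⊕ V))
  rnAtoms : Set (R × (Fin m ⊕ V) × (Fin m ⊕ V))

namespace CQ

variable {C R A : Type} {m : ℕ}

/-- `I ⊨ q(atup)`. -/
def Eval (q : CQ C R m) (I : Interp C R A) (atup : Fin m → A) : Prop :=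
  ∃ h : Fin m ⊕ q.V → A, (∀ i, h (.inl i) = atup i) ∧
    (∀ p ∈ q.cnAtoms, I.cn p.1 (h p.2)) ∧
    (∀ t ∈ q.rnAtoms, I.rn t.1 (h t.2.1) (h t.2.2))

/-- The canonical database of a CQ (all variables as constants). -/
def canon (q : CQ C R m) : Interp C R (Fin m ⊕ q.V) where
  cn c x := (c, x) ∈ q.cnAtoms
  rn r x y := (r, x, y) ∈ q.rnAtoms

/-- The treewidth of a CQ: the treewidth of its canonical database restricted to
the quantified variables (answer variables do not contribute). -/
def HasTWq (q : CQ C R m) (ℓ k : ℕ) : Prop :=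
  HasTW (q.canon.restrict (Set.range Sum.inr)) ℓ k

end CQ

/-- A union of conjunctive queries, as an indexed family of CQs of the same arity. -/
structure UCQ (C R : Type) (m : ℕ) where
  ι : Type
  d : ι → CQ C R m

def UCQ.Eval {C R A : Type} {m : ℕ} (q : UCQ C R m) (I : Interp C R A)
    (atup : Fin m → A) : Prop :=
  ∃ i, (q.d i).Eval I atup

/-! ### Certain answers (generic in the ontology semantics) -/

/-- `atup` is a certain answer on `D` for query semantics `Ev`, w.r.t. all
(nonempty) models satisfying `Mod`: under the standard-names-free reading,
models of `D` are interpretations together with a homomorphism from `D`. -/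
def Certain {C R A : Type} {m : ℕ} (Mod : ∀ Δ : Type, Interp C R Δ → Prop)
    (D : Interp C R A) (Ev : ∀ Δ : Type, Interp C R Δ → (Fin m → Δ) → Prop)
    (atup : Fin m → A) : Prop :=
  ∀ (Δ : Type), Nonempty Δ → ∀ I : Interp C R Δ, Mod Δ I →
    ∀ h : Hom D I, Ev Δ I (fun i => h.toFun (atup i))

/-- `D` is satisfiable w.r.t. the class of models described by `Mod`. -/
def Satisfiable {C R A : Type} (Mod : ∀ Δ : Type, Interp C R Δ → Prop)
    (D : Interp C R A) : Prop :=
  ∃ (Δ : Type) (_ : Nonempty Δ) (I : Interp C R Δ), Nonempty (Hom D I) ∧ Mod Δ I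

/-! ### First-order logic (no equality, no constants) -/

inductive FO (C R : Type) : ℕ → Type
  | cn {n : ℕ} (c : C) (i : Fin n) : FO C R n
  | rn {n : ℕ} (r : R) (i j : Fin n) : FO C R n
  | fls {n : ℕ} : FO C R n
  | imp {n : ℕ} (φ ψ : FO C R n) : FO C R n
  | all {n : ℕ} (φ : FO C R (n+1)) : FO C R n

def FO.Eval {C R A : Type} (I : Interp C R A) : {n : ℕ} → FO C R n → (Fin n → A) → Prop
  | _, .cn c i, v => I.cn c (v i)
  | _, .rn r i j, v => I.rn r (v i) (v j)
  | _, .fls, _ => False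
  | _, .imp φ ψ, v => φ.Eval I v → ψ.Eval I v
  | _, .all φ, v => ∀ a, φ.Eval I (Fin.cons a v)

/-- `I` is a model of the FO ontology `O`. -/
def ModelsFO {C R A : Type} (I : Interp C R A) (O : Set (FO C R 0)) : Prop :=
  ∀ φ ∈ O, φ.Eval I (fun i => i.elim0)

/-- `O ⊨ O'` for FO ontologies. -/
def FOEntails {C R : Type} (O O' : Set (FO C R 0)) : Prop :=
  ∀ (Δ : Type), Nonempty Δ → ∀ I : Interp C R Δ, ModelsFO I O → ModelsFO I O'

/-! ### Tuple-generating dependencies -/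

/-- A TGD with `n` frontier variables, whose body and head are CQs with the
frontier variables as answer variables; `head = none` stands for `⊥`. -/
structure TGD (C R : Type) where
  n : ℕ
  body : CQ C R n
  head : Option (CQ C R n)

def TGD.Sat {C R A : Type} (t : TGD C R) (I : Interp C R A) : Prop :=
  ∀ v : Fin t.n → A, t.body.Eval I v →
    match t.head with
    | some ψ => ψ.Eval I v
    | none => False

def ModelsTGDSet {C R A : Type} (I : Interp C R A) (O : Set (TGD C R)) : Prop :=
  ∀ t ∈ O, t.Sat I

/-! ### Description logic concepts -/

/-- `ELIU` concepts with ⊥, possibly disjunction and the universal role. -/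
inductive ELIU (C R : Type) : Type
  | top
  | bot
  | cn (c : C)
  | inter (X Y : ELIU C R)
  | union (X Y : ELIU C R)
  | exR (ρ : R ⊕ R) (X : ELIU C R)
  | exU (X : ELIU C R)

namespace ELIU

variable {C R A : Type}

def sem (I : Interp C R A) : ELIU C R → A → Prop
  | .top, _ => True
  | .bot, _ => False
  | .cn c, a => I.cn c a
  | .inter X Y, a => X.sem I a ∧ Y.sem I a
  | .union X Y, a => X.sem I a ∨ Y.sem I a
  | .exR ρ X, a => ∃ b, I.roleE ρ a b ∧ X.sem I b
  | .exU X, _ => ∃ b, X.sem I b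

def uFree : ELIU C R → Prop
  | .top => True
  | .bot => True
  | .cn _ => True
  | .inter X Y => X.uFree ∧ Y.uFree
  | .union X Y => X.uFree ∧ Y.uFree
  | .exR _ X => X.uFree
  | .exU _ => False

def disjFree : ELIU C R → Prop
  | .top => True
  | .bot => True
  | .cn _ => True
  | .inter X Y => X.disjFree ∧ Y.disjFree
  | .union _ _ => False
  | .exR _ X => X.disjFree
  | .exU X => X.disjFree

def botFree : ELIU C R → Prop
  | .top => True
  | .bot => False
  | .cn _ => True
  | .inter X Y => X.botFree ∧ Y.botFree
  | .union X Y => X.botFree ∧ Y.botFree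
  | .exR _ X => X.botFree
  | .exU X => X.botFree

end ELIU

/-- A concept inclusion is an `ELI_⊥` CI (no disjunction, no universal role). -/
def ELIbotCI {C R : Type} (p : ELIU C R × ELIU C R) : Prop :=
  p.1.disjFree ∧ p.1.uFree ∧ p.2.disjFree ∧ p.2.uFree

/-- A concept inclusion is an `ELI` CI. -/
def ELICI {C R : Type} (p : ELIU C R × ELIU C R) : Prop :=
  ELIbotCI p ∧ p.1.botFree ∧ p.2.botFree

def ModelsELIUOnt {C R A : Type} (I : Interp C R A)
    (T : Set (ELIU C R × ELIU C R)) : Prop :=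
  ∀ p ∈ T, ∀ a, p.1.sem I a → p.2.sem I a

def EntailsELIU {C R : Type} (T T' : Set (ELIU C R × ELIU C R)) : Prop :=
  ∀ (Δ : Type), Nonempty Δ → ∀ I : Interp C R Δ, ModelsELIUOnt I T → ModelsELIUOnt I T'

/-- `ALCI` concepts. -/
inductive ALCI (C R : Type) : Type
  | top
  | cn (c : C)
  | neg (X : ALCI C R)
  | inter (X Y : ALCI C R)
  | exR (ρ : R ⊕ R) (X : ALCI C R)

namespace ALCI

variable {C R A : Type}

def sem (I : Interp C R A) : ALCI C R → A → Prop
  | .top, _ => True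
  | .cn c, a => I.cn c a
  | .neg X, a => ¬ X.sem I a
  | .inter X Y, a => X.sem I a ∧ Y.sem I a
  | .exR ρ X, a => ∃ b, I.roleE ρ a b ∧ X.sem I b

/-- `C ⊔ D` as an abbreviation. -/
def unionA (X Y : ALCI C R) : ALCI C R := .neg (.inter (.neg X) (.neg Y))

/-- `∀r.C` as an abbreviation. -/
def allR (r : R) (X : ALCI C R) : ALCI C R := .neg (.exR (.inl r) (.neg X))

/-- `∃rⁿ.C` (n-fold nesting). -/
def exPow (r : R) : ℕ → ALCI C R → ALCI C R
  | 0, X => X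
  | n+1, X => .exR (.inl r) (exPow r n X)

end ALCI

def ModelsALCIOnt {C R A : Type} (I : Interp C R A)
    (O : Set (ALCI C R × ALCI C R)) : Prop :=
  ∀ p ∈ O, ∀ a, p.1.sem I a → p.2.sem I a

def EntailsALCI {C R : Type} (O O' : Set (ALCI C R × ALCI C R)) : Prop :=
  ∀ (Δ : Type), Nonempty Δ → ∀ I : Interp C R Δ, ModelsALCIOnt I O → ModelsALCIOnt I O'

/-- The set `O≈` of all `ELI^u_⊥` concept inclusions entailed by the ALCI
ontology `O`. -/
def ELIuApprox {C R : Type} (O : Set (ALCI C R × ALCI C R)) :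
    Set (ELIU C R × ELIU C R) :=
  {p | p.1.disjFree ∧ p.2.disjFree ∧
    ∀ (Δ : Type), Nonempty Δ → ∀ I : Interp C R Δ, ModelsALCIOnt I O →
      ∀ a, p.1.sem I a → p.2.sem I a}

/-! ### bELIQs -/

/-- A bELIQ: either an ELIQ `C(x)` (unary) or a Boolean ELIQ `∃u.C`. -/
inductive BELIQ (C R : Type) : Type
  | q1 (X : ELIU C R)
  | q0 (X : ELIU C R)

namespace BELIQ

variable {C R A : Type}

def arity : BELIQ C R → ℕ
  | .q1 _ => 1
  | .q0 _ => 0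

/-- Well-formedness: the underlying concept is an `ELI` concept. -/
def wf : BELIQ C R → Prop
  | .q1 X => X.disjFree ∧ X.uFree ∧ X.botFree
  | .q0 X => X.disjFree ∧ X.uFree ∧ X.botFree

def Eval : (q : BELIQ C R) → Interp C R A → (Fin q.arity → A) → Prop
  | .q1 X, I, v => X.sem I (v ⟨0, Nat.zero_lt_one⟩)
  | .q0 X, I, _ => ∃ a, X.sem I a

end BELIQ

/-! ### Tree unraveling -/

/-- Paths in a database, indexed by their tail. -/
inductive UPath {C R A : Type} (I : Interp C R A) : A → Type
  | nil (a : A) : UPath I a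
  | cons {a : A} (p : UPath I a) (ρ : R ⊕ R) (b : A) (h : I.roleE ρ a b) : UPath I b

/-- The tree unraveling `D≈_S` of `D` at `S`: it contains all facts of `D|_S`,
the facts along paths, and the connecting facts between `S` and paths. -/
def treeUnravel {C R A : Type} (D : Interp C R A) (S : Set A) :
    Interp C R (A ⊕ (Σ a : A, UPath D a)) where
  cn c x :=
    match x with
    | .inl a => a ∈ S ∧ D.cn c a
    | .inr p => D.cn c p.1
  rn r x y :=
    (∃ a b, a ∈ S ∧ b ∈ S ∧ D.rn r a b ∧ x = .inl a ∧ y = .inl b) ∨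
    (∃ (a : A) (p : UPath D a) (b : A) (h : D.roleE (.inl r) a b),
        x = .inr ⟨a, p⟩ ∧ y = .inr ⟨b, p.cons (.inl r) b h⟩) ∨
    (∃ (a : A) (p : UPath D a) (b : A) (h : D.roleE (.inr r) a b),
        y = .inr ⟨a, p⟩ ∧ x = .inr ⟨b, p.cons (.inr r) b h⟩) ∨
    (∃ (a b : A) (p : UPath D b), a ∈ S ∧ D.rn r a b ∧ x = .inl a ∧ y = .inr ⟨b, p⟩) ∨
    (∃ (a b : A) (p : UPath D b), a ∈ S ∧ D.rn r b a ∧ x = .inr ⟨b, p⟩ ∧ y = .inl a)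

/-! ### (ℓ,k)-unraveling -/

/-- Admissibility of a bag `T` in an `(ℓ,k)`-sequence: `S ⊆ T ⊆ adom(D)` and
`|T \ S| ≤ k`. -/
def SeqOk {C R A : Type} (D : Interp C R A) (S : Set A) (k : ℕ) (T : Set A) : Prop :=
  S ⊆ T ∧ T ⊆ D.adom ∧ (T \ S).Finite ∧ (T \ S).ncard ≤ k

/-- `(ℓ,k)`-sequences `S₀,O₀,S₁,…,Sₙ`, indexed by the last bag `Sₙ`. -/
inductive LKSeq {C R A : Type} (D : Interp C R A) (S : Set A) (ℓ k : ℕ) : Set A → Type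
  | first (S₀ : Set A) (h : SeqOk D S k S₀) : LKSeq D S ℓ k S₀
  | step {T : Set A} (v : LKSeq D S ℓ k T) (O T' : Set A)
      (hO : S ⊆ O) (hOT : O ⊆ T ∩ T') (hOf : (O \ S).Finite)
      (hOl : (O \ S).ncard ≤ ℓ) (hT' : SeqOk D S k T') : LKSeq D S ℓ k T'

/-- Elements of the `(ℓ,k)`-unraveling: elements of `S` keep their names
(`Sum.inl`), all other copies are identified by the sequence at which they are
introduced. -/
abbrev LKElem {C R A : Type} (D : Interp C R A) (S : Set A) (ℓ k : ℕ) : Type :=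
  A ⊕ (Σ T : Set A, LKSeq D S ℓ k T × A)

/-- The copy `a_v` of `a` in the bag of the sequence `v`. -/
noncomputable def LKSeq.rep {C R A : Type} {D : Interp C R A} {S : Set A} {ℓ k : ℕ} :
    {T : Set A} → LKSeq D S ℓ k T → A → LKElem D S ℓ k
  | _, .first S₀ h, a =>
      if a ∈ S then Sum.inl a else Sum.inr ⟨S₀, (LKSeq.first S₀ h, a)⟩
  | _, .step v O T' h1 h2 h3 h4 h5, a =>
      if a ∈ S then Sum.inl a
      else if a ∈ O then v.rep a
      else Sum.inr ⟨T', (LKSeq.step v O T' h1 h2 h3 h4 h5, a)⟩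

/-- The `(ℓ,k)`-unraveling `D≈_{S,ℓ,k}` of `D` up to `S`. -/
noncomputable def unravelLK {C R A : Type} (D : Interp C R A) (S : Set A) (ℓ k : ℕ) :
    Interp C R (LKElem D S ℓ k) where
  cn c x := ∃ (T : Set A) (v : LKSeq D S ℓ k T) (a : A),
      a ∈ T ∧ x = v.rep a ∧ D.cn c a
  rn r x y := ∃ (T : Set A) (v : LKSeq D S ℓ k T) (a b : A),
      a ∈ T ∧ b ∈ T ∧ x = v.rep a ∧ y = v.rep b ∧ D.rn r a b

/-- The uncopying map. -/
def uncopyLK {C R A : Type} {D : Interp C R A} {S : Set A} {ℓ k : ℕ} :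
    LKElem D S ℓ k → A
  | .inl a => a
  | .inr x => x.2.2

/-- `x` is a copy of `a` in the `(ℓ,k)`-unraveling. -/
def IsCopyLK {C R A : Type} {D : Interp C R A} {S : Set A} {ℓ k : ℕ}
    (x : LKElem D S ℓ k) (a : A) : Prop :=
  ∃ (T : Set A) (v : LKSeq D S ℓ k T), a ∈ T ∧ x = v.rep a

/-- The frontier-one `ℓ,k,ℓ',k'`-TGDs entailed by the ALCI ontology `O`. -/
def approxTGDs {C R : Type} (O : Set (ALCI C R × ALCI C R)) (ℓ k ℓ' k' : ℕ) :
    Set (TGD C R) :=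
  {t | t.n ≤ 1 ∧ HasTW t.body.canon ℓ k ∧
       (∀ ψ, t.head = some ψ → HasTW ψ.canon ℓ' k') ∧
       ∀ (Δ : Type), Nonempty Δ → ∀ I : Interp C R Δ, ModelsALCIOnt I O → t.Sat I}

/-! ### The disjunct operation f and the approximation set E_O -/

def fDisj {C R : Type} : ELIU C R → Set (ELIU C R)
  | .top => {ELIU.top}
  | .bot => {ELIU.bot}
  | .cn c => {ELIU.cn c}
  | .inter X Y => {Z | ∃ X' ∈ fDisj X, ∃ Y' ∈ fDisj Y, Z = ELIU.inter X' Y'}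
  | .union X Y => fDisj X ∪ fDisj Y
  | .exR ρ X => {Z | ∃ X' ∈ fDisj X, Z = ELIU.exR ρ X'}
  | .exU X => {Z | ∃ X' ∈ fDisj X, Z = ELIU.exU X'}

/-- The rewriting of `O` replacing each `C ⊑ D` by `{C' ⊑ D : C' ∈ f(C)}`. -/
def rewriteO {C R : Type} (O : Set (ELIU C R × ELIU C R)) :
    Set (ELIU C R × ELIU C R) :=
  {p | ∃ q ∈ O, p.2 = q.2 ∧ p.1 ∈ fDisj q.1}

/-- `E_O`: all ontologies obtained by choosing, for each inclusion `C' ⊑ D` of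
the rewriting, one inclusion `C' ⊑ D'` with `D' ∈ f(D)`. -/
def EO {C R : Type} (O : Set (ELIU C R × ELIU C R)) :
    Set (Set (ELIU C R × ELIU C R)) :=
  {Oh | ∃ g : ELIU C R × ELIU C R → ELIU C R,
      (∀ p ∈ rewriteO O, g p ∈ fDisj p.2) ∧
      Oh = {q | ∃ p ∈ rewriteO O, q = (p.1, g p)}}

/-! ### Direct products -/

def prodInterp {C R : Type} {n : ℕ} {A : Fin n → Type}
    (I : ∀ i, Interp C R (A i)) : Interp C R (∀ i, A i) where
  cn c f := ∀ i, (I i).cn c (f i)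
  rn r f g := ∀ i, (I i).rn r (f i) (g i)

/-! ### Concrete databases and queries for specific statements -/

/-- The grid CQ `q_m` of Statement 16, as its canonical database. -/
def gridDB {C R : Type} (m : ℕ) (r : R) (Aname : Fin m × Fin m → C) :
    Interp C R (Fin m × Fin m) where
  cn c p := c = Aname p
  rn ρ p q := ρ = r ∧ Even (p.1.1 + p.2.1) ∧
    ((p.1.1 : ℤ) - (q.1.1 : ℤ)).natAbs + ((p.2.1 : ℤ) - (q.2.1 : ℤ)).natAbs = 1

/-- The 3-cycle database of Statement 19. -/
def cycleDB {C R : Type} (nA : Fin 3 → C) (r : R) : Interp C R (Fin 3) where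
  cn c i := c = nA i
  rn ρ i j := ρ = r ∧ j = i + 1

/-- The ontology `{Aᵢ ⊓ Aⱼ ⊑ B : 1 ≤ i < j ≤ 3}` of Statement 19. -/
def cycleOnt {C R : Type} (nA : Fin 3 → C) (nB : C) : Set (ELIU C R × ELIU C R) :=
  {p | ∃ i j : Fin 3, i < j ∧
    p = (ELIU.inter (ELIU.cn (nA i)) (ELIU.cn (nA j)), ELIU.cn nB)}

/-- The Boolean CQ `∃x B(x)` of Statement 19. -/
def existsB {C R : Type} (nB : C) : CQ C R 0 where
  V := Unit
  cnAtoms := {(nB, Sum.inr ())}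
  rnAtoms := ∅

/-- The ontology `O = {∃r.⊤ ⊓ ∀r.A ⊑ B₁ ⊔ B₂}` of Statement 14. -/
def O14 {C R : Type} (a b1 b2 : C) (r : R) : Set (ALCI C R × ALCI C R) :=
  {(ALCI.inter (ALCI.exR (.inl r) ALCI.top) (ALCI.allR r (ALCI.cn a)),
    ALCI.unionA (ALCI.cn b1) (ALCI.cn b2))}

/-- The ontology `O_n` of Statement 14. -/
def O14n {C R : Type} (a b1 x : C) (r : R) (n : ℕ) : Set (ALCI C R × ALCI C R) :=
  {(ALCI.exR (.inl r) (ALCI.cn a), ALCI.exPow r n (ALCI.cn x)),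
   (ALCI.exR (.inl r) (ALCI.inter (ALCI.cn a) (ALCI.exPow r (n-1) (ALCI.cn x))),
    ALCI.cn b1)}

/-!
Every concept is equivalent to the disjunction of its disjuncts `f(C)`, so each member of `E_O`
entails the rewriting of `O` and hence `O`. Conversely, models of an `ELI_⊥` ontology are closed
under direct products, in which `ELI_⊥` concepts are evaluated componentwise, while every concept
is preserved by the projections. Hence `ELI_⊥` ontologies have the disjunction property: if
`O' ⊨ C' ⊑ D` with `C'` an `ELI_⊥` concept, the product of countermodels for all `C' ⊑ D'`,
`D' ∈ f(D)`, would refute `C' ⊑ D`. Choosing such a `D'` for every rewritten inclusion of `O`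
yields a member of `E_O` entailed by `O'`.
-/

section ApproximationSet

variable {C R : Type}

instance : Inhabited (ELIU C R) := ⟨.top⟩

theorem fDisj_nonempty (X : ELIU C R) : (fDisj X).Nonempty := by
  induction X with
  | top | bot | cn _ => exact ⟨_, rfl⟩
  | inter X Y hX hY =>
      obtain ⟨X', hX'⟩ := hX
      obtain ⟨Y', hY'⟩ := hY
      exact ⟨_, X', hX', Y', hY', rfl⟩
  | union X Y hX _ => exact hX.mono Set.subset_union_left
  | exR ρ X hX | exU X hX =>
      obtain ⟨X', hX'⟩ := hX
      exact ⟨_, X', hX', rfl⟩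

theorem fDisj_finite (X : ELIU C R) : (fDisj X).Finite := by
  induction X with
  | top | bot | cn _ => exact Set.finite_singleton _
  | inter X Y hX hY =>
      refine (hX.image2 ELIU.inter hY).subset ?_
      rintro _ ⟨X', hX', Y', hY', rfl⟩
      exact Set.mem_image2_of_mem hX' hY'
  | union X Y hX hY => exact hX.union hY
  | exR ρ X hX =>
      refine (hX.image (ELIU.exR ρ)).subset ?_
      rintro _ ⟨X', hX', rfl⟩
      exact Set.mem_image_of_mem _ hX'
  | exU X hX =>
      refine (hX.image ELIU.exU).subset ?_
      rintro _ ⟨X', hX', rfl⟩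
      exact Set.mem_image_of_mem _ hX'

theorem disjFree_of_mem_fDisj {X X' : ELIU C R} (h : X' ∈ fDisj X) : X'.disjFree := by
  induction X generalizing X' with
  | top | bot | cn _ => subst h; trivial
  | inter X Y hX hY =>
      obtain ⟨X'', hX'', Y'', hY'', rfl⟩ := h
      exact ⟨hX hX'', hY hY''⟩
  | union X Y hX hY => exact h.elim hX hY
  | exR ρ X hX | exU X hX =>
      obtain ⟨X'', hX'', rfl⟩ := h
      exact hX (X' := X'') hX''

theorem uFree_of_mem_fDisj {X X' : ELIU C R} (hX : X.uFree) (h : X' ∈ fDisj X) :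
    X'.uFree := by
  induction X generalizing X' with
  | top | bot | cn _ => subst h; trivial
  | inter X Y ihX ihY =>
      obtain ⟨X'', hX'', Y'', hY'', rfl⟩ := h
      exact ⟨ihX hX.1 hX'', ihY hX.2 hY''⟩
  | union X Y ihX ihY => exact h.elim (ihX hX.1) (ihY hX.2)
  | exR ρ X ihX =>
      obtain ⟨X'', hX'', rfl⟩ := h
      exact ihX hX (X' := X'') hX''
  | exU X _ => exact hX.elim

theorem ELIU.sem_iff_exists_mem_fDisj {A : Type} (I : Interp C R A) (X : ELIU C R) (a : A) :
    X.sem I a ↔ ∃ X' ∈ fDisj X, X'.sem I a := by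
  induction X generalizing a with
  | top | bot | cn _ => simp [fDisj]
  | inter X Y hX hY =>
      constructor
      · rintro ⟨hXa, hYa⟩
        obtain ⟨X', hX', hX'a⟩ := (hX a).1 hXa
        obtain ⟨Y', hY', hY'a⟩ := (hY a).1 hYa
        exact ⟨_, ⟨X', hX', Y', hY', rfl⟩, hX'a, hY'a⟩
      · rintro ⟨_, ⟨X', hX', Y', hY', rfl⟩, hX'a, hY'a⟩
        exact ⟨(hX a).2 ⟨X', hX', hX'a⟩, (hY a).2 ⟨Y', hY', hY'a⟩⟩
  | union X Y hX hY =>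
      simp only [ELIU.sem, hX, hY, fDisj, Set.mem_union, or_and_right, exists_or]
  | exR ρ X hX =>
      constructor
      · rintro ⟨b, hab, hXb⟩
        obtain ⟨X', hX', hX'b⟩ := (hX b).1 hXb
        exact ⟨_, ⟨X', hX', rfl⟩, b, hab, hX'b⟩
      · rintro ⟨_, ⟨X', hX', rfl⟩, b, hab, hX'b⟩
        exact ⟨b, hab, (hX b).2 ⟨X', hX', hX'b⟩⟩
  | exU X hX =>
      constructor
      · rintro ⟨b, hXb⟩
        obtain ⟨X', hX', hX'b⟩ := (hX b).1 hXb
        exact ⟨_, ⟨X', hX', rfl⟩, b, hX'b⟩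
      · rintro ⟨_, ⟨X', hX', rfl⟩, b, hX'b⟩
        exact ⟨b, (hX b).2 ⟨X', hX', hX'b⟩⟩

theorem Hom.map_roleE {A B : Type} {I : Interp C R A} {J : Interp C R B} (h : Hom I J)
    (ρ : R ⊕ R) (a b : A) (hab : I.roleE ρ a b) : J.roleE ρ (h.toFun a) (h.toFun b) := by
  cases ρ with
  | inl r => exact h.map_rn r a b hab
  | inr r => exact h.map_rn r b a hab

theorem ELIU.sem_hom {A B : Type} {I : Interp C R A} {J : Interp C R B} (h : Hom I J)
    (X : ELIU C R) {a : A} (ha : X.sem I a) : X.sem J (h.toFun a) := by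
  induction X generalizing a with
  | top => trivial
  | bot => exact ha
  | cn c => exact h.map_cn c a ha
  | inter X Y hX hY => exact ⟨hX ha.1, hY ha.2⟩
  | union X Y hX hY => exact ha.imp hX hY
  | exR ρ X hX =>
      obtain ⟨b, hab, hXb⟩ := ha
      exact ⟨h.toFun b, h.map_roleE ρ a b hab, hX hXb⟩
  | exU X hX =>
      obtain ⟨b, hXb⟩ := ha
      exact ⟨h.toFun b, hX hXb⟩

def Interp.pi {ι : Type} {A : ι → Type} (I : ∀ i, Interp C R (A i)) :
    Interp C R (∀ i, A i) where
  cn c f := ∀ i, (I i).cn c (f i)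
  rn r f g := ∀ i, (I i).rn r (f i) (g i)

def Interp.evalHom {ι : Type} {A : ι → Type} (I : ∀ i, Interp C R (A i)) (i : ι) :
    Hom (Interp.pi I) (I i) where
  toFun f := f i
  map_cn _ _ h := h i
  map_rn _ _ _ h := h i

theorem Interp.roleE_pi {ι : Type} {A : ι → Type} (I : ∀ i, Interp C R (A i)) (ρ : R ⊕ R)
    (f g : ∀ i, A i) : (Interp.pi I).roleE ρ f g ↔ ∀ i, (I i).roleE ρ (f i) (g i) := by
  cases ρ <;> rfl

theorem ELIU.sem_pi {ι : Type} [Nonempty ι] {A : ι → Type} (I : ∀ i, Interp C R (A i))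
    {X : ELIU C R} (hXd : X.disjFree) (hXu : X.uFree) {f : ∀ i, A i}
    (hf : ∀ i, X.sem (I i) (f i)) : X.sem (Interp.pi I) f := by
  induction X generalizing f with
  | top => trivial
  | bot => exact hf (Classical.arbitrary ι)
  | cn c => exact hf
  | inter X Y hX hY =>
      exact ⟨hX hXd.1 hXu.1 fun i => (hf i).1, hY hXd.2 hXu.2 fun i => (hf i).2⟩
  | union X Y _ _ => exact hXd.elim
  | exR ρ X hX =>
      choose g hfg hXg using hf
      exact ⟨g, (Interp.roleE_pi I ρ f g).2 hfg, hX hXd hXu hXg⟩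
  | exU X _ => exact hXu.elim

theorem ModelsELIUOnt.pi {ι : Type} [Nonempty ι] {A : ι → Type} {I : ∀ i, Interp C R (A i)}
    {T : Set (ELIU C R × ELIU C R)} (hT : ∀ p ∈ T, ELIbotCI p)
    (hI : ∀ i, ModelsELIUOnt (I i) T) : ModelsELIUOnt (Interp.pi I) T := by
  intro p hp f hf
  obtain ⟨-, -, hd, hu⟩ := hT p hp
  exact ELIU.sem_pi I hd hu fun i =>
    hI i p hp (f i) (ELIU.sem_hom (Interp.evalHom I i) p.1 hf)

theorem entailsELIU_singleton_iff {T : Set (ELIU C R × ELIU C R)} {X Y : ELIU C R} :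
    EntailsELIU T {(X, Y)} ↔ ∀ (Δ : Type), Nonempty Δ → ∀ I : Interp C R Δ,
      ModelsELIUOnt I T → ∀ a, X.sem I a → Y.sem I a := by
  simp [EntailsELIU, ModelsELIUOnt]

theorem entailsELIU_iff_forall_singleton {T T' : Set (ELIU C R × ELIU C R)} :
    EntailsELIU T T' ↔ ∀ p ∈ T', EntailsELIU T {p} := by
  simp only [EntailsELIU, ModelsELIUOnt, Set.mem_singleton_iff, forall_eq]
  exact ⟨fun h p hp Δ hΔ I hI => h Δ hΔ I hI p hp, fun h Δ hΔ I hI p hp => h p hp Δ hΔ I hI⟩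

theorem exists_mem_fDisj_entailsELIU {T : Set (ELIU C R × ELIU C R)}
    (hT : ∀ p ∈ T, ELIbotCI p) {X Y : ELIU C R} (hXd : X.disjFree) (hXu : X.uFree)
    (h : EntailsELIU T {(X, Y)}) : ∃ Y' ∈ fDisj Y, EntailsELIU T {(X, Y')} := by
  by_contra! hne
  simp only [entailsELIU_singleton_iff, not_forall, exists_prop] at hne
  choose Δ hΔ I hI a hXa hYa using fun Y' : fDisj Y => hne Y' Y'.2
  have : Nonempty (fDisj Y) := (fDisj_nonempty Y).to_subtype
  obtain ⟨Y', hY', hY'a⟩ := (ELIU.sem_iff_exists_mem_fDisj _ Y a).1 <|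
    entailsELIU_singleton_iff.1 h _ (Classical.nonempty_pi.2 hΔ) _ (ModelsELIUOnt.pi hT hI) a
      (ELIU.sem_pi I hXd hXu hXa)
  exact hYa ⟨Y', hY'⟩ (ELIU.sem_hom (Interp.evalHom I ⟨Y', hY'⟩) Y' hY'a)

theorem rewriteO_finite {O : Set (ELIU C R × ELIU C R)} (hO : O.Finite) :
    (rewriteO O).Finite := by
  refine (hO.biUnion fun q _ => (fDisj_finite q.1).image (·, q.2)).subset ?_
  rintro ⟨X, Y⟩ ⟨q, hq, rfl, hX⟩
  exact Set.mem_biUnion hq ⟨X, hX, rfl⟩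

theorem modelsELIUOnt_rewriteO_iff {A : Type} {I : Interp C R A}
    {O : Set (ELIU C R × ELIU C R)} : ModelsELIUOnt I (rewriteO O) ↔ ModelsELIUOnt I O := by
  constructor
  · intro hI p hp a ha
    obtain ⟨X', hX', hX'a⟩ := (ELIU.sem_iff_exists_mem_fDisj I p.1 a).1 ha
    exact hI (X', p.2) ⟨p, hp, rfl, hX'⟩ a hX'a
  · rintro hI p ⟨q, hq, hpq, hp⟩ a ha
    rw [hpq]
    exact hI q hq a ((ELIU.sem_iff_exists_mem_fDisj I q.1 a).2 ⟨p.1, hp, ha⟩)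

theorem eq_image_of_mem_EO {O Oh : Set (ELIU C R × ELIU C R)} (hOh : Oh ∈ EO O) :
    ∃ g : ELIU C R × ELIU C R → ELIU C R, (∀ p ∈ rewriteO O, g p ∈ fDisj p.2) ∧
      Oh = (fun p => (p.1, g p)) '' rewriteO O := by
  obtain ⟨g, hg, rfl⟩ := hOh
  refine ⟨g, hg, ?_⟩
  ext q
  simp only [Set.mem_ofPred_eq, Set.mem_image, eq_comm]

theorem ELIbotCI_of_mem_EO {O Oh : Set (ELIU C R × ELIU C R)}
    (hO : ∀ p ∈ O, p.1.uFree ∧ p.2.uFree) (hOh : Oh ∈ EO O) : ∀ p ∈ Oh, ELIbotCI p := by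
  obtain ⟨g, hg, rfl⟩ := eq_image_of_mem_EO hOh
  rintro _ ⟨p, hp, rfl⟩
  have hgp := hg p hp
  obtain ⟨q, hq, hpq, hp1⟩ := hp
  have hp2 : p.2.uFree := hpq ▸ (hO q hq).2
  exact ⟨disjFree_of_mem_fDisj hp1, uFree_of_mem_fDisj (hO q hq).1 hp1,
    disjFree_of_mem_fDisj hgp, uFree_of_mem_fDisj hp2 hgp⟩

theorem entailsELIU_of_mem_EO {O Oh : Set (ELIU C R × ELIU C R)} (hOh : Oh ∈ EO O) :
    EntailsELIU Oh O := by
  obtain ⟨g, hg, rfl⟩ := eq_image_of_mem_EO hOh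
  intro Δ _ I hI
  refine modelsELIUOnt_rewriteO_iff.1 fun p hp a ha => ?_
  exact (ELIU.sem_iff_exists_mem_fDisj I p.2 a).2
    ⟨g p, hg p hp, hI _ (Set.mem_image_of_mem _ hp) a ha⟩

end ApproximationSet

/-- for every `ELIU_⊥` ontology `O`, the set `E_O` is an
exhaustive `ELI_⊥`-approximation set for `O`: its members are (finite) `ELI_⊥`
ontologies, each member entails `O`, and every `ELI_⊥` ontology entailing `O`
entails some member. -/
theorem stmt12 {C R : Type} (O : Set (ELIU C R × ELIU C R))
    (hO : ∀ p ∈ O, p.1.uFree ∧ p.2.uFree) (hOfin : O.Finite) :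
    (∀ Oh ∈ EO O, Oh.Finite ∧ ∀ p ∈ Oh, ELIbotCI p) ∧
    (∀ Oh ∈ EO O, EntailsELIU Oh O) ∧
    (∀ O'' : Set (ELIU C R × ELIU C R), (∀ p ∈ O'', ELIbotCI p) → O''.Finite →
      EntailsELIU O'' O → ∃ Oh ∈ EO O, EntailsELIU O'' Oh) := by
  refine ⟨fun Oh hOh => ⟨?_, ELIbotCI_of_mem_EO hO hOh⟩, fun Oh => entailsELIU_of_mem_EO, ?_⟩
  · obtain ⟨g, -, rfl⟩ := eq_image_of_mem_EO hOh
    exact (rewriteO_finite hOfin).image _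
  · intro O'' hO'' _ hent
    have hrew : ∀ p ∈ rewriteO O, ∃ D' ∈ fDisj p.2, EntailsELIU O'' {(p.1, D')} := by
      intro p hp
      have hp_ent : EntailsELIU O'' {p} := entailsELIU_iff_forall_singleton.1
        (fun Δ hΔ I hI => modelsELIUOnt_rewriteO_iff.2 (hent Δ hΔ I hI)) p hp
      obtain ⟨q, hq, -, hp1⟩ := hp
      exact exists_mem_fDisj_entailsELIU hO'' (disjFree_of_mem_fDisj hp1)
        (uFree_of_mem_fDisj (hO q hq).1 hp1) hp_ent
    choose! g hg hgent using hrew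
    refine ⟨_, ⟨g, hg, rfl⟩, entailsELIU_iff_forall_singleton.2 ?_⟩
    rintro _ ⟨p, hp, rfl⟩
    exact hgent p hp
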